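/- Let P and Q be finite pure posets with rank functions rk, let n = rk(P) be the length of the maximal chains of P, let C_n be a chain with n+1 elements, and let Q̃ = (Q × C_n)_{[0,n]} be the rank-selected subposet of the product poset Q × C_n consisting of all elements of rank at most n. Then the Rees product P * Q is isomorphic as a poset to the unmixed Segre product P ∘ Q̃ = {(p, q̃) ∈ P × Q̃ | rk(p) = rk(q̃)}; explicitly, the map sending (p, q, i) with rk(p) = rk(q) + i to (p, q) is a poset isomorphism P ∘ Q̃ → P * Q. -/

import Mathlib

noncomputable section

open Classical

def rankIn (P : Type) [PartialOrder P] (x : P) : ℕ := (Order.height x).toNat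

/-- A poset is pure if all its (inclusion-)maximal chains have the same length
(equivalently, the same cardinality). -/
def IsPurePoset (P : Type) [PartialOrder P] : Prop :=
  ∀ c₁ c₂ : Set P, IsMaxChain (· ≤ ·) c₁ → IsMaxChain (· ≤ ·) c₂ → c₁.ncard = c₂.ncard

/-- The underlying set of the Rees product `P * Q` of two (pure) posets:
pairs `(p, q)` with `rk p ≥ rk q`. -/
@[ext]
structure ReesProduct (P Q : Type) [PartialOrder P] [PartialOrder Q] where
  pr : P × Q
  rank_le : rankIn Q pr.2 ≤ rankIn P pr.1

/-- The order of the Rees product: `(p, q) ≤ (p', q')` iff `p ≤ p'`, `q ≤ q'` and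
`rk p' - rk p ≥ rk q' - rk q`. -/
instance (P Q : Type) [PartialOrder P] [PartialOrder Q] : PartialOrder (ReesProduct P Q) where
  le a b := a.pr.1 ≤ b.pr.1 ∧ a.pr.2 ≤ b.pr.2 ∧
    (rankIn Q b.pr.2 : ℤ) - (rankIn Q a.pr.2 : ℤ) ≤
      (rankIn P b.pr.1 : ℤ) - (rankIn P a.pr.1 : ℤ)
  le_refl a := ⟨le_refl _, le_refl _, by omega⟩
  le_trans a b c hab hbc :=
    ⟨hab.1.trans hbc.1, hab.2.1.trans hbc.2.1, by
      have h1 := hab.2.2; have h2 := hbc.2.2; omega⟩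
  le_antisymm a b hab hba := by
    ext
    · exact le_antisymm hab.1 hba.1
    · exact le_antisymm hab.2.1 hba.2.1

/-!
In `Q × C_n` the height of `(q, i)` is `rk q + i`, and `Q̃` is a lower set of `Q × ℕ`, so it has
the same heights. Hence in a Segre pair `(p, (q, i))` the coordinate `i = rk p - rk q` is
determined by `(p, q)`, and given the rank equations `rk p = rk q + i`, `rk p' = rk q' + i'`,
the condition `i ≤ i'` is exactly the Rees condition `rk q' - rk q ≤ rk p' - rk p`.
-/

open Order

section FiniteRank

variable {α : Type} [PartialOrder α] [Fintype α]

lemma height_ne_top_of_fintype (x : α) : height x ≠ ⊤ :=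
  ne_top_of_le_ne_top (ENat.natCast_ne_top (Fintype.card α))
    (height_le fun p _ => by exact_mod_cast p.length_lt_card.le)

lemma natCast_rankIn (x : α) : (rankIn α x : ℕ∞) = height x :=
  ENat.natCast_toNat (height_ne_top_of_fintype x)

lemma rankIn_strictMono : StrictMono (rankIn α) := fun a b hab => by
  have := height_strictMono hab (height_ne_top_of_fintype a).lt_top
  rwa [← natCast_rankIn, ← natCast_rankIn, Nat.cast_lt] at this

lemma rankIn_mono : Monotone (rankIn α) := rankIn_strictMono.monotone

end FiniteRank

lemma rankIn_le_of_isMaxChain {α : Type} [PartialOrder α] {n : ℕ}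
    (hn : ∀ c : Set α, IsMaxChain (· ≤ ·) c → c.ncard = n + 1) (x : α) : rankIn α x ≤ n := by
  refine ENat.toNat_le_of_le_natCast (height_le fun p _ => ?_)
  obtain ⟨c, hc, hpc⟩ := p.strictMono.monotone.isChain_range.exists_maxChain
  -- `c` is finite because `ncard` vanishes on infinite sets.
  have hcard := Set.ncard_le_ncard hpc (Set.finite_of_ncard_ne_zero (by simp [hn c hc]))
  rw [Set.ncard_range_of_injective p.strictMono.injective, Nat.card_eq_fintype_card,
    Fintype.card_fin, hn c hc] at hcard
  exact_mod_cast Nat.le_of_succ_le_succ hcard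

lemma height_prod_nat {α : Type} [PartialOrder α] [Fintype α] (q : α) (i : ℕ) :
    height (q, i) = (rankIn α q + i : ℕ) := by
  refine le_antisymm ?_ ?_
  · have hmono : StrictMono fun x : α × ℕ => rankIn α x.1 + x.2 := by
      rintro ⟨a, i⟩ ⟨b, j⟩ hlt
      rcases Prod.lt_iff.mp hlt with ⟨hab, hij⟩ | ⟨hab, hij⟩
      · have := rankIn_strictMono hab; dsimp at *; omega
      · have := rankIn_mono hab; dsimp at *; omega
    simpa using height_le_height_apply_of_strictMono _ hmono (q, i)
  · induction i with
    | zero =>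
      simpa [natCast_rankIn] using
        height_le_height_apply_of_strictMono (fun a : α => (a, 0)) (fun a b h => by simpa) q
    | succ i ih =>
      have := height_add_one_le (show (q, i) < (q, i + 1) by simp [Prod.lt_iff])
      push_cast at ih ⊢
      grw [← this, ← ih, add_assoc]

/-- `(Q × C_n)_{[0,n]}`, the rank of `(q, i)` in `Q × C_n` being `rk q + i`. -/
abbrev TruncatedProduct (Q : Type) [PartialOrder Q] (n : ℕ) : Type :=
  {x : Q × Fin (n + 1) // rankIn Q x.1 + (x.2 : ℕ) ≤ n}

/-- The unmixed Segre product `P ∘ R`. -/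
abbrev SegreProduct (P R : Type) [PartialOrder P] [PartialOrder R] : Type :=
  {y : P × R // rankIn P y.1 = rankIn R y.2}

section TruncatedProduct

variable {Q : Type} [PartialOrder Q] [Fintype Q] {n : ℕ}

lemma rankIn_truncatedProduct (x : TruncatedProduct Q n) :
    rankIn (TruncatedProduct Q n) x = rankIn Q x.1.1 + x.1.2 := by
  let f : TruncatedProduct Q n → Q × ℕ := Prod.map id Fin.val ∘ Subtype.val
  have hf : StrictMono f :=
    (strictMono_id.prodMap Fin.val_strictMono).comp (Subtype.strictMono_coe _)
  -- `f` embeds the truncated product as a lower set, so heights are computed in `Q × ℕ`.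
  suffices height x = height (f x) by
    rw [rankIn, this, height_prod_nat, ENat.toNat_natCast]
    rfl
  refine height_eq_of_strictMono f hf ?_ x
  rintro ⟨⟨q, i⟩, hx⟩ ⟨q', j⟩ hlt
  obtain ⟨hq, hj⟩ := Prod.mk_le_mk.mp hlt.le
  dsimp at hx hq hj
  have hrank := rankIn_mono hq
  refine ⟨⟨(q', ⟨j, by omega⟩), by dsimp; omega⟩, ?_, rfl⟩
  exact lt_of_le_of_ne ⟨hq, Fin.le_def.mpr hj⟩ fun h => hlt.ne (congrArg f h)

end TruncatedProduct

section SegreReesIso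

variable {P Q : Type} [PartialOrder P] [PartialOrder Q] [Fintype Q] {n : ℕ}

lemma rankIn_segreProduct_fst (y : SegreProduct P (TruncatedProduct Q n)) :
    rankIn P y.1.1 = rankIn Q y.1.2.1.1 + y.1.2.1.2 :=
  y.2.trans (rankIn_truncatedProduct _)

def segreProductOrderIsoReesProduct (hP : ∀ p : P, rankIn P p ≤ n) :
    SegreProduct P (TruncatedProduct Q n) ≃o ReesProduct P Q where
  toFun y := ⟨(y.1.1, y.1.2.1.1), by dsimp; have := rankIn_segreProduct_fst y; omega⟩
  invFun z :=
    have := hP z.pr.1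
    have := z.rank_le
    ⟨(z.pr.1, ⟨(z.pr.2, ⟨rankIn P z.pr.1 - rankIn Q z.pr.2, by omega⟩), by dsimp; omega⟩),
      by rw [rankIn_truncatedProduct]; dsimp; omega⟩
  left_inv y := by
    have hy := rankIn_segreProduct_fst y
    obtain ⟨⟨p, ⟨⟨q, i⟩, _⟩⟩, _⟩ := y
    dsimp at hy
    ext <;> dsimp
    omega
  right_inv _ := rfl
  map_rel_iff' {y y'} := by
    have hy := rankIn_segreProduct_fst y
    have hy' := rankIn_segreProduct_fst y'
    change _ ∧ _ ∧ _ ↔ _ ∧ _ ∧ _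
    simp only [Equiv.coe_fn_mk, Fin.le_def]
    refine and_congr_right fun _ => and_congr_right fun hq => ?_
    have := rankIn_mono hq
    omega

end SegreReesIso

theorem rees_product_iso_segre_product_general
    (P Q : Type) [PartialOrder P] [PartialOrder Q] [Fintype Q] (n : ℕ)
    (hn : ∀ c : Set P, IsMaxChain (· ≤ ·) c → c.ncard = n + 1) :
    ∃ e : {y : P × {x : Q × Fin (n + 1) // rankIn Q x.1 + (x.2 : ℕ) ≤ n} //
            rankIn P y.1 = rankIn {x : Q × Fin (n + 1) // rankIn Q x.1 + (x.2 : ℕ) ≤ n} y.2} ≃o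
          ReesProduct P Q,
      ∀ y, (e y).pr = (y.1.1, y.1.2.1.1) :=
  ⟨segreProductOrderIsoReesProduct (rankIn_le_of_isMaxChain hn), fun _ => rfl⟩

/-- **Lemma (Björner–Welker, Section 3).**
Let `P` and `Q` be finite pure posets and let `n = rk P` (the common length of the maximal
chains of `P`).  Let `Q̃ = (Q × C_n)_{[0,n]}` be the rank-selected subposet of the product of
`Q` with an `(n+1)`-element chain `C_n`, consisting of all elements of rank at most `n`.
Then the Rees product `P * Q` is isomorphic to the (unmixed) Segre product `P ∘ Q̃`;
explicitly, the map sending `(p, (q, i))` (where `rk p = rk q + i`) to `(p, q)` is an order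
isomorphism. -/
theorem rees_product_iso_segre_product
    (P Q : Type) [PartialOrder P] [PartialOrder Q] [Fintype P] [Fintype Q]
    (hP : IsPurePoset P) (hQ : IsPurePoset Q) (n : ℕ)
    (hn : ∀ c : Set P, IsMaxChain (· ≤ ·) c → c.ncard = n + 1) :
    ∃ e : {y : P × {x : Q × Fin (n + 1) // rankIn Q x.1 + (x.2 : ℕ) ≤ n} //
            rankIn P y.1 = rankIn {x : Q × Fin (n + 1) // rankIn Q x.1 + (x.2 : ℕ) ≤ n} y.2} ≃o
          ReesProduct P Q,
      ∀ y, (e y).pr = (y.1.1, y.1.2.1.1) :=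
  rees_product_iso_segre_product_general P Q n hn

end
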